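/- The C-optimal estimator ρ_C solves the minimax-MSE problem: sup_{F∈𝓕} MSE(F,ρ_C) = c − ∫‖ρ_C‖² dν, and for every square-ν-integrable Borel function ρ:ℝ^{M₁}×ℝ^{M₂}→ℝ^N one has sup_{F∈𝓕} MSE(F,ρ_C) ≤ sup_{F∈𝓕} MSE(F,ρ) (claim 3 of Theorem 1: ρ_C = argmin_ρ sup_{F∈𝓕} MSE(F,ρ)). -/

import Mathlib

open MeasureTheory

noncomputable section

abbrev Euc (k : ℕ) : Type := EuclideanSpace ℝ (Fin k)

abbrev XSp (M₁ M₂ : ℕ) : Type := Euc M₁ × Euc M₂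

abbrev ΩSp (M₁ M₂ N : ℕ) : Type := XSp M₁ M₂ × Euc N

/-- Mean square error of a (multi-domain) estimator `ρ` under joint law `F` of `((X₁,X₂),Y)`. -/
def MSE {M₁ M₂ N : ℕ} (F : Measure (ΩSp M₁ M₂ N)) (ρ : XSp M₁ M₂ → Euc N) : ℝ :=
  ∫ ω, ‖ω.2 - ρ ω.1‖ ^ 2 ∂F

/-- The class `C = A + B` of estimators `(x₁,x₂) ↦ φ(x₁) + ψ(x₂)`, `φ ∈ A`, `ψ ∈ B`. -/
def Cset {M₁ M₂ N : ℕ} (A : Submodule ℝ (Euc M₁ → Euc N)) (B : Submodule ℝ (Euc M₂ → Euc N)) :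
    Set (XSp M₁ M₂ → Euc N) :=
  {ρ | ∃ φ ∈ A, ∃ ψ ∈ B, ρ = fun x => φ x.1 + ψ x.2}

/-- The family `𝓕` of joint distributions consistent with the partial knowledge
`(ν, φ_A, ψ_B, c)`. -/
def SetF {M₁ M₂ N : ℕ} (ν : Measure (XSp M₁ M₂))
    (A : Submodule ℝ (Euc M₁ → Euc N)) (B : Submodule ℝ (Euc M₂ → Euc N))
    (φA : Euc M₁ → Euc N) (ψB : Euc M₂ → Euc N) (c : ℝ) :
    Set (Measure (ΩSp M₁ M₂ N)) :=
  {F | IsProbabilityMeasure F ∧ F.map Prod.fst = ν ∧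
    MemLp (fun ω : ΩSp M₁ M₂ N => ω.2) 2 F ∧
    (∀ φ ∈ A, MSE F (fun x => φA x.1) ≤ MSE F (fun x => φ x.1)) ∧
    (∀ ψ ∈ B, MSE F (fun x => ψB x.2) ≤ MSE F (fun x => ψ x.2)) ∧
    ∫ ω, ‖ω.2‖ ^ 2 ∂F = c}

/-- The σ-algebra generated by `(X₁,X₂)` on the sample space. -/
def sigmaX (M₁ M₂ N : ℕ) : MeasurableSpace (ΩSp M₁ M₂ N) :=
  MeasurableSpace.comap Prod.fst inferInstance

/-- The σ-algebra generated by `X₁` on the sample space. -/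
def sigmaX1 (M₁ M₂ N : ℕ) : MeasurableSpace (ΩSp M₁ M₂ N) :=
  MeasurableSpace.comap (fun ω => ω.1.1) inferInstance

/-- The σ-algebra generated by `X₁` on the `(X₁,X₂)`-space. -/
def sigmaX1' (M₁ M₂ : ℕ) : MeasurableSpace (XSp M₁ M₂) :=
  MeasurableSpace.comap Prod.fst inferInstance

/-- Multi-domain regret of `ρ(X₁,X₂)`: its MSE minus that of `E_F[Y | X₁,X₂]`. -/
def REG {M₁ M₂ N : ℕ} (F : Measure (ΩSp M₁ M₂ N)) (ρ : XSp M₁ M₂ → Euc N) : ℝ :=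
  MSE F ρ - ∫ ω, ‖ω.2 - condExp (sigmaX M₁ M₂ N) F (fun ω' => ω'.2) ω‖ ^ 2 ∂F

/-- Mean square error of a single-domain estimator `ρ(X₁)`. -/
def MSE1 {M₁ M₂ N : ℕ} (F : Measure (ΩSp M₁ M₂ N)) (ρ : Euc M₁ → Euc N) : ℝ :=
  ∫ ω, ‖ω.2 - ρ ω.1.1‖ ^ 2 ∂F

/-- Single-domain regret of `ρ(X₁)`: its MSE minus that of `E_F[Y | X₁]`. -/
def REG1 {M₁ M₂ N : ℕ} (F : Measure (ΩSp M₁ M₂ N)) (ρ : Euc M₁ → Euc N) : ℝ :=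
  MSE1 F ρ - ∫ ω, ‖ω.2 - condExp (sigmaX1 M₁ M₂ N) F (fun ω' => ω'.2) ω‖ ^ 2 ∂F

section Aux
open RealInnerProductSpace
set_option linter.unusedSectionVars false
variable {α : Type*} [MeasurableSpace α] {μ : Measure α}
variable {E : Type*} [NormedAddCommGroup E] [InnerProductSpace ℝ E]

lemma aux_integrable_inner {f g : α → E} (hf : MemLp f 2 μ) (hg : MemLp g 2 μ) :
    Integrable (fun x => ⟪f x, g x⟫) μ := by
  have h := L2.integrable_inner (𝕜 := ℝ) (hf.toLp f) (hg.toLp g)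
  refine h.congr ?_
  filter_upwards [hf.coeFn_toLp, hg.coeFn_toLp] with x h1 h2
  rw [h1, h2]

lemma aux_integrable_normsq {f : α → E} (hf : MemLp f 2 μ) :
    Integrable (fun x => ‖f x‖ ^ 2) μ := hf.norm.integrable_sq

lemma aux_expand_sub {f g : α → E} (hf : MemLp f 2 μ) (hg : MemLp g 2 μ) :
    ∫ x, ‖f x - g x‖ ^ 2 ∂μ
      = ∫ x, ‖f x‖ ^ 2 ∂μ - 2 * ∫ x, ⟪f x, g x⟫ ∂μ + ∫ x, ‖g x‖ ^ 2 ∂μ := by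
  have h : (fun x => ‖f x - g x‖ ^ 2)
      = fun x => ‖f x‖ ^ 2 - 2 * ⟪f x, g x⟫ + ‖g x‖ ^ 2 :=
    funext fun x => norm_sub_sq_real _ _
  have hi1 : Integrable (fun x => ‖f x‖ ^ 2 - 2 * ⟪f x, g x⟫) μ :=
    (aux_integrable_normsq hf).sub ((aux_integrable_inner hf hg).const_mul 2)
  have hi2 : Integrable (fun x => 2 * ⟪f x, g x⟫) μ :=
    (aux_integrable_inner hf hg).const_mul 2
  rw [h, integral_add hi1 (aux_integrable_normsq hg),
    integral_sub (aux_integrable_normsq hf) hi2, integral_const_mul]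

lemma aux_expand_add {f g : α → E} (hf : MemLp f 2 μ) (hg : MemLp g 2 μ) :
    ∫ x, ‖f x + g x‖ ^ 2 ∂μ
      = ∫ x, ‖f x‖ ^ 2 ∂μ + 2 * ∫ x, ⟪f x, g x⟫ ∂μ + ∫ x, ‖g x‖ ^ 2 ∂μ := by
  have h : (fun x => ‖f x + g x‖ ^ 2)
      = fun x => ‖f x‖ ^ 2 + 2 * ⟪f x, g x⟫ + ‖g x‖ ^ 2 :=
    funext fun x => norm_add_sq_real _ _
  have hi1 : Integrable (fun x => ‖f x‖ ^ 2 + 2 * ⟪f x, g x⟫) μ :=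
    (aux_integrable_normsq hf).add ((aux_integrable_inner hf hg).const_mul 2)
  have hi2 : Integrable (fun x => 2 * ⟪f x, g x⟫) μ :=
    (aux_integrable_inner hf hg).const_mul 2
  rw [h, integral_add hi1 (aux_integrable_normsq hg),
    integral_add (aux_integrable_normsq hf) hi2, integral_const_mul]

lemma aux_orth {Y g₀ g : α → E} (hY : MemLp Y 2 μ) (hg₀ : MemLp g₀ 2 μ) (hg : MemLp g 2 μ)
    (hmin : ∀ t : ℝ, ∫ x, ‖Y x - g₀ x‖ ^ 2 ∂μ ≤ ∫ x, ‖Y x - (g₀ x + t • g x)‖ ^ 2 ∂μ) :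
    ∫ x, ⟪Y x - g₀ x, g x⟫ ∂μ = 0 := by
  have hu : MemLp (fun x => Y x - g₀ x) 2 μ := hY.sub hg₀
  set I := ∫ x, ⟪Y x - g₀ x, g x⟫ ∂μ with hI
  set J := ∫ x, ‖g x‖ ^ 2 ∂μ with hJdef
  have hJ : 0 ≤ J := integral_nonneg fun x => sq_nonneg _
  have key : ∀ t : ℝ, 0 ≤ -(2 * t) * I + t ^ 2 * J := by
    intro t
    have hg' : MemLp (fun x => t • g x) 2 μ := hg.const_smul t
    have h1 : ∫ x, ‖Y x - (g₀ x + t • g x)‖ ^ 2 ∂μ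
        = ∫ x, ‖(Y x - g₀ x) - t • g x‖ ^ 2 ∂μ := by
      congr 1; funext x; rw [sub_add_eq_sub_sub]
    have h2 := aux_expand_sub (f := fun x => Y x - g₀ x) (g := fun x => t • g x) hu hg'
    have h3 : ∫ x, ⟪Y x - g₀ x, t • g x⟫ ∂μ = t * I := by
      simp_rw [real_inner_smul_right]; rw [integral_const_mul]
    have h4 : ∫ x, ‖t • g x‖ ^ 2 ∂μ = t ^ 2 * J := by
      have he : (fun x => ‖t • g x‖ ^ 2) = fun x => t ^ 2 * ‖g x‖ ^ 2 := by
        funext x; rw [norm_smul]; simp [mul_pow, sq_abs]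
      rw [he, integral_const_mul]
    have h5 := hmin t
    rw [h1, h2, h3, h4] at h5
    linarith
  rcases eq_or_lt_of_le hJ with hJ0 | hJ0
  · have h := key I
    have hI2 : I ^ 2 = 0 := le_antisymm (by nlinarith) (sq_nonneg I)
    exact (pow_eq_zero_iff (by norm_num : (2:ℕ) ≠ 0)).mp hI2
  · have h := key (I / J)
    have e1 : -(2 * (I / J)) * I + (I / J) ^ 2 * J = -(I ^ 2 / J) := by
      field_simp; ring
    rw [e1] at h
    have h2 : I ^ 2 / J ≤ 0 := by linarith
    have h3 : I ^ 2 ≤ 0 := by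
      have := mul_nonpos_of_nonpos_of_nonneg h2 hJ0.le
      rwa [div_mul_cancel₀ _ hJ0.ne'] at this
    have hI2 : I ^ 2 = 0 := le_antisymm h3 (sq_nonneg I)
    exact (pow_eq_zero_iff (by norm_num : (2:ℕ) ≠ 0)).mp hI2

lemma aux_min {Y g₀ g : α → E} (hY : MemLp Y 2 μ) (hg₀ : MemLp g₀ 2 μ) (hg : MemLp g 2 μ)
    (horth : ∫ x, ⟪Y x - g₀ x, g₀ x - g x⟫ ∂μ = 0) :
    ∫ x, ‖Y x - g₀ x‖ ^ 2 ∂μ ≤ ∫ x, ‖Y x - g x‖ ^ 2 ∂μ := by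
  have h1 : ∫ x, ‖Y x - g x‖ ^ 2 ∂μ
      = ∫ x, ‖(Y x - g₀ x) + (g₀ x - g x)‖ ^ 2 ∂μ := by
    congr 1; funext x; congr 1; abel
  have h2 := aux_expand_add (f := fun x => Y x - g₀ x) (g := fun x => g₀ x - g x)
    (hY.sub hg₀) (hg₀.sub hg)
  rw [h1, h2, horth]
  have h3 : 0 ≤ ∫ x, ‖g₀ x - g x‖ ^ 2 ∂μ := integral_nonneg fun x => sq_nonneg _
  linarith

lemma aux_comp_L2 {β : Type*} [MeasurableSpace β] {ν' : Measure β} {π : α → β}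
    (hπ : Measurable π) (hmap : μ.map π = ν') {g : β → E}
    (hgm : AEStronglyMeasurable g ν') (hg : MemLp g 2 ν') :
    MemLp (fun a => g (π a)) 2 μ :=
  (memLp_map_measure_iff (by rwa [hmap]) hπ.aemeasurable).mp (by rwa [hmap])

lemma aux_comp_int {β : Type*} [MeasurableSpace β] {ν' : Measure β} {π : α → β}
    (hπ : Measurable π) (hmap : μ.map π = ν') {h : β → ℝ}
    (hh : AEStronglyMeasurable h ν') :
    ∫ b, h b ∂ν' = ∫ a, h (π a) ∂μ := by
  rw [← hmap] at hh ⊢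
  exact integral_map hπ.aemeasurable hh

end Aux

set_option maxHeartbeats 1000000 in
open RealInnerProductSpace in
/-- Theorem 1, claim 3: `ρ_C` solves the minimax-MSE problem:
`sup_(F∈𝓕) MSE(F,ρ_C) = c − ∫‖ρ_C‖² dν`, and its worst-case MSE is no larger than that of
any square-`ν`-integrable Borel estimator `ρ(X₁,X₂)`. -/
theorem stmt_6
    (M₁ M₂ N : ℕ) (hM₁ : 0 < M₁) (hM₂ : 0 < M₂) (hN : 0 < N)
    (ν : Measure (XSp M₁ M₂)) (hνp : IsProbabilityMeasure ν)
    (hνmom : MemLp (id : XSp M₁ M₂ → XSp M₁ M₂) 2 ν)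
    (A : Submodule ℝ (Euc M₁ → Euc N)) (B : Submodule ℝ (Euc M₂ → Euc N))
    (hAmeas : ∀ φ ∈ A, Measurable φ) (hBmeas : ∀ ψ ∈ B, Measurable ψ)
    (hAL2 : ∀ φ ∈ A, MemLp φ 2 (ν.map Prod.fst))
    (hBL2 : ∀ ψ ∈ B, MemLp ψ 2 (ν.map Prod.snd))
    (φA : Euc M₁ → Euc N) (ψB : Euc M₂ → Euc N) (hφA : φA ∈ A) (hψB : ψB ∈ B)
    (c : ℝ) (hc : 0 < c)
    (hne : (SetF ν A B φA ψB c).Nonempty)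
    (ρC : XSp M₁ M₂ → Euc N) (hρCmem : ρC ∈ Cset A B)
    (hρCmin : ∀ F ∈ SetF ν A B φA ψB c, ∀ ρ' ∈ Cset A B, MSE F ρC ≤ MSE F ρ') :
    (⨆ F ∈ SetF ν A B φA ψB c, MSE F ρC) = c - ∫ x, ‖ρC x‖ ^ 2 ∂ν ∧
    ∀ ρ : XSp M₁ M₂ → Euc N, Measurable ρ → MemLp ρ 2 ν →
      (⨆ F ∈ SetF ν A B φA ψB c, MSE F ρC) ≤ ⨆ F ∈ SetF ν A B φA ψB c, MSE F ρ := by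
  -- basic measurability / integrability for elements of `C`
  have hCmeas : ∀ ρ' ∈ Cset A B, Measurable ρ' := by
    rintro ρ' ⟨φ, hφ, ψ, hψ, rfl⟩
    exact ((hAmeas φ hφ).comp measurable_fst).add ((hBmeas ψ hψ).comp measurable_snd)
  have hCL2 : ∀ ρ' ∈ Cset A B, MemLp ρ' 2 ν := by
    rintro ρ' ⟨φ, hφ, ψ, hψ, rfl⟩
    have h1 : MemLp (fun x : XSp M₁ M₂ => φ x.1) 2 ν :=
      aux_comp_L2 measurable_fst rfl (hAmeas φ hφ).aestronglyMeasurable (hAL2 φ hφ)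
    have h2 : MemLp (fun x : XSp M₁ M₂ => ψ x.2) 2 ν :=
      aux_comp_L2 measurable_snd rfl (hBmeas ψ hψ).aestronglyMeasurable (hBL2 ψ hψ)
    exact h1.add h2
  have hρCmeas : Measurable ρC := hCmeas ρC hρCmem
  have hρC2 : MemLp ρC 2 ν := hCL2 ρC hρCmem
  -- lifting square-integrability and integrals along `Prod.fst`
  have hliftL2 : ∀ F : Measure (ΩSp M₁ M₂ N), F.map Prod.fst = ν →
      ∀ g : XSp M₁ M₂ → Euc N, Measurable g → MemLp g 2 ν →
        MemLp (fun ω : ΩSp M₁ M₂ N => g ω.1) 2 F :=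
    fun F hmap g hgm hg => aux_comp_L2 measurable_fst hmap hgm.aestronglyMeasurable hg
  have hliftInt : ∀ F : Measure (ΩSp M₁ M₂ N), F.map Prod.fst = ν →
      ∀ g : XSp M₁ M₂ → Euc N, Measurable g →
        ∫ x, ‖g x‖ ^ 2 ∂ν = ∫ ω, ‖g ω.1‖ ^ 2 ∂F :=
    fun F hmap g hgm =>
      aux_comp_int measurable_fst hmap ((hgm.norm.pow_const 2).aestronglyMeasurable)
  have hmapA : ∀ F : Measure (ΩSp M₁ M₂ N), F.map Prod.fst = ν →
      F.map (fun ω : ΩSp M₁ M₂ N => ω.1.1) = ν.map Prod.fst := by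
    intro F hmap
    rw [← hmap, Measure.map_map measurable_fst measurable_fst]
    rfl
  have hmapB : ∀ F : Measure (ΩSp M₁ M₂ N), F.map Prod.fst = ν →
      F.map (fun ω : ΩSp M₁ M₂ N => ω.1.2) = ν.map Prod.snd := by
    intro F hmap
    rw [← hmap, Measure.map_map measurable_snd measurable_fst]
    rfl
  have hliftA : ∀ F : Measure (ΩSp M₁ M₂ N), F.map Prod.fst = ν →
      ∀ φ ∈ A, MemLp (fun ω : ΩSp M₁ M₂ N => φ ω.1.1) 2 F :=
    fun F hmap φ hφ =>
      aux_comp_L2 (measurable_fst.fst) (hmapA F hmap)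
        (hAmeas φ hφ).aestronglyMeasurable (hAL2 φ hφ)
  have hliftB : ∀ F : Measure (ΩSp M₁ M₂ N), F.map Prod.fst = ν →
      ∀ ψ ∈ B, MemLp (fun ω : ΩSp M₁ M₂ N => ψ ω.1.2) 2 F :=
    fun F hmap ψ hψ =>
      aux_comp_L2 (measurable_fst.snd) (hmapB F hmap)
        (hBmeas ψ hψ).aestronglyMeasurable (hBL2 ψ hψ)
  -- orthogonality of `Y - ρC` against `C`
  have hCorth : ∀ F ∈ SetF ν A B φA ψB c, ∀ ρ' ∈ Cset A B,
      ∫ ω, ⟪ω.2 - ρC ω.1, ρ' ω.1⟫ ∂F = 0 := by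
    intro F hF ρ' hρ'
    obtain ⟨hP, hmap, hY, hA, hB, hcF⟩ := hF
    refine aux_orth hY (hliftL2 F hmap ρC hρCmeas hρC2)
      (hliftL2 F hmap ρ' (hCmeas ρ' hρ') (hCL2 ρ' hρ')) ?_
    intro t
    obtain ⟨φc, hφc, ψc, hψc, hρCe⟩ := hρCmem
    obtain ⟨φ', hφ', ψ', hψ', hρ'e⟩ := hρ'
    have hmem : (fun x => ρC x + t • ρ' x) ∈ Cset A B := by
      refine ⟨φc + t • φ', add_mem hφc (Submodule.smul_mem _ t hφ'),
        ψc + t • ψ', add_mem hψc (Submodule.smul_mem _ t hψ'), ?_⟩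
      funext x
      simp only [hρCe, hρ'e, Pi.add_apply, Pi.smul_apply, smul_add]
      abel
    have h := hρCmin F ⟨hP, hmap, hY, hA, hB, hcF⟩ _ hmem
    simp only [MSE] at h
    exact h
  -- consequence: `∫⟪Y, ρC⟫ = ∫‖ρC‖²`
  have hIP : ∀ F ∈ SetF ν A B φA ψB c,
      ∫ ω, ⟪ω.2, ρC ω.1⟫ ∂F = ∫ ω, ‖ρC ω.1‖ ^ 2 ∂F := by
    intro F hF
    have h := hCorth F hF ρC hρCmem
    obtain ⟨hP, hmap, hY, _, _, _⟩ := hF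
    have hρCF : MemLp (fun ω : ΩSp M₁ M₂ N => ρC ω.1) 2 F :=
      hliftL2 F hmap ρC hρCmeas hρC2
    have he : (fun ω : ΩSp M₁ M₂ N => ⟪ω.2 - ρC ω.1, ρC ω.1⟫)
        = fun ω => ⟪ω.2, ρC ω.1⟫ - ‖ρC ω.1‖ ^ 2 := by
      funext ω; rw [inner_sub_left, real_inner_self_eq_norm_sq]
    rw [he] at h
    have hi1 : Integrable (fun ω : ΩSp M₁ M₂ N => ⟪ω.2, ρC ω.1⟫) F :=
      aux_integrable_inner hY hρCF
    have hi2 : Integrable (fun ω : ΩSp M₁ M₂ N => ‖ρC ω.1‖ ^ 2) F :=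
      aux_integrable_normsq hρCF
    rw [integral_sub hi1 hi2] at h
    linarith
  -- the MSE of `ρC` is constant on `𝓕`
  have hconst : ∀ F ∈ SetF ν A B φA ψB c, MSE F ρC = c - ∫ x, ‖ρC x‖ ^ 2 ∂ν := by
    intro F hF
    have hip := hIP F hF
    obtain ⟨hP, hmap, hY, _, _, hcF⟩ := hF
    have hρCF : MemLp (fun ω : ΩSp M₁ M₂ N => ρC ω.1) 2 F :=
      hliftL2 F hmap ρC hρCmeas hρC2
    have h1 := aux_expand_sub (f := fun ω : ΩSp M₁ M₂ N => ω.2)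
      (g := fun ω => ρC ω.1) hY hρCF
    unfold MSE
    rw [h1, hip, hcF, ← hliftInt F hmap ρC hρCmeas]
    ring
  have hMSEnn : ∀ (F : Measure (ΩSp M₁ M₂ N)) (ρ' : XSp M₁ M₂ → Euc N), 0 ≤ MSE F ρ' :=
    fun F ρ' => integral_nonneg fun ω => sq_nonneg _
  have hk : 0 ≤ c - ∫ x, ‖ρC x‖ ^ 2 ∂ν := by
    obtain ⟨F₀, hF₀⟩ := hne
    rw [← hconst F₀ hF₀]; exact hMSEnn _ _
  have hub : ∀ F : Measure (ΩSp M₁ M₂ N),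
      (⨆ _ : F ∈ SetF ν A B φA ψB c, MSE F ρC) ≤ c - ∫ x, ‖ρC x‖ ^ 2 ∂ν :=
    fun F => Real.iSup_le (fun h => (hconst F h).le) hk
  have part1 : (⨆ F ∈ SetF ν A B φA ψB c, MSE F ρC) = c - ∫ x, ‖ρC x‖ ^ 2 ∂ν := by
    refine le_antisymm (Real.iSup_le hub hk) ?_
    obtain ⟨F₀, hF₀⟩ := hne
    have h1 : (⨆ _ : F₀ ∈ SetF ν A B φA ψB c, MSE F₀ ρC) = MSE F₀ ρC := ciSup_pos hF₀
    have h2 := le_ciSup (f := fun F => ⨆ _ : F ∈ SetF ν A B φA ψB c, MSE F ρC)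
      ⟨c - ∫ x, ‖ρC x‖ ^ 2 ∂ν, by rintro x ⟨F, rfl⟩; exact hub F⟩ F₀
    rw [h1, hconst F₀ hF₀] at h2
    exact h2
  refine ⟨part1, ?_⟩
  intro ρ hρm hρ2
  rw [part1]
  obtain ⟨F₀, hF₀⟩ := hne
  have hF₀' := hF₀
  obtain ⟨hP₀, hmap₀, hY₀, hA₀, hB₀, hc₀⟩ := hF₀
  haveI := hP₀
  -- the reflected measure
  set T : ΩSp M₁ M₂ N → ΩSp M₁ M₂ N := fun ω => (ω.1, (2:ℝ) • ρC ω.1 - ω.2) with hTdef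
  have hTm : Measurable T :=
    measurable_fst.prodMk
      (((hρCmeas.comp measurable_fst).const_smul (2:ℝ)).sub measurable_snd)
  have hρCF₀ : MemLp (fun ω : ΩSp M₁ M₂ N => ρC ω.1) 2 F₀ :=
    hliftL2 F₀ hmap₀ ρC hρCmeas hρC2
  have hY' : MemLp (fun ω : ΩSp M₁ M₂ N => (2:ℝ) • ρC ω.1 - ω.2) 2 F₀ :=
    (hρCF₀.const_smul (2:ℝ)).sub hY₀
  have hMSE₁ : ∀ ρ'' : XSp M₁ M₂ → Euc N, Measurable ρ'' →
      MSE (F₀.map T) ρ'' = ∫ ω, ‖(2:ℝ) • ρC ω.1 - ω.2 - ρ'' ω.1‖ ^ 2 ∂F₀ := by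
    intro ρ'' h
    have hint : AEStronglyMeasurable (fun ω : ΩSp M₁ M₂ N => ‖ω.2 - ρ'' ω.1‖ ^ 2)
        (F₀.map T) :=
      ((measurable_snd.sub (h.comp measurable_fst)).norm.pow_const 2).aestronglyMeasurable
    unfold MSE
    rw [integral_map hTm.aemeasurable hint]
  -- orthogonality relations for the original measure
  have hAorth₀ : ∀ φ ∈ A, ∫ ω, ⟪ω.2 - φA ω.1.1, φ ω.1.1⟫ ∂F₀ = 0 := by
    intro φ hφ
    refine aux_orth hY₀ (hliftA F₀ hmap₀ φA hφA) (hliftA F₀ hmap₀ φ hφ) ?_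
    intro t
    exact hA₀ (φA + t • φ) (add_mem hφA (Submodule.smul_mem _ t hφ))
  have hBorth₀ : ∀ ψ ∈ B, ∫ ω, ⟪ω.2 - ψB ω.1.2, ψ ω.1.2⟫ ∂F₀ = 0 := by
    intro ψ hψ
    refine aux_orth hY₀ (hliftB F₀ hmap₀ ψB hψB) (hliftB F₀ hmap₀ ψ hψ) ?_
    intro t
    exact hB₀ (ψB + t • ψ) (add_mem hψB (Submodule.smul_mem _ t hψ))
  -- orthogonality relations for the reflected measure
  have hAorthT : ∀ φ ∈ A,
      ∫ ω, ⟪(2:ℝ) • ρC ω.1 - ω.2 - φA ω.1.1, φ ω.1.1⟫ ∂F₀ = 0 := by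
    intro φ hφ
    have hφC : (fun x : XSp M₁ M₂ => φ x.1) ∈ Cset A B :=
      ⟨φ, hφ, 0, zero_mem _, by funext x; simp⟩
    have h1 : ∫ ω, ⟪ω.2 - ρC ω.1, φ ω.1.1⟫ ∂F₀ = 0 := hCorth F₀ hF₀' _ hφC
    have h2 := hAorth₀ φ hφ
    have hφF : MemLp (fun ω : ΩSp M₁ M₂ N => φ ω.1.1) 2 F₀ := hliftA F₀ hmap₀ φ hφ
    have hφAF : MemLp (fun ω : ΩSp M₁ M₂ N => φA ω.1.1) 2 F₀ := hliftA F₀ hmap₀ φA hφA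
    have he : (fun ω : ΩSp M₁ M₂ N => ⟪(2:ℝ) • ρC ω.1 - ω.2 - φA ω.1.1, φ ω.1.1⟫)
        = fun ω => (-2) * ⟪ω.2 - ρC ω.1, φ ω.1.1⟫ + ⟪ω.2 - φA ω.1.1, φ ω.1.1⟫ := by
      funext ω
      have hv : (2:ℝ) • ρC ω.1 - ω.2 - φA ω.1.1
          = (-2 : ℝ) • (ω.2 - ρC ω.1) + (ω.2 - φA ω.1.1) := by module
      rw [hv, inner_add_left, real_inner_smul_left]
    have hi1 : Integrable (fun ω : ΩSp M₁ M₂ N => (-2) * ⟪ω.2 - ρC ω.1, φ ω.1.1⟫) F₀ :=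
      (aux_integrable_inner (f := fun ω : ΩSp M₁ M₂ N => ω.2 - ρC ω.1)
        (g := fun ω => φ ω.1.1) (hY₀.sub hρCF₀) hφF).const_mul (-2)
    have hi2 : Integrable (fun ω : ΩSp M₁ M₂ N => ⟪ω.2 - φA ω.1.1, φ ω.1.1⟫) F₀ :=
      aux_integrable_inner (f := fun ω : ΩSp M₁ M₂ N => ω.2 - φA ω.1.1)
        (g := fun ω => φ ω.1.1) (hY₀.sub hφAF) hφF
    rw [he, integral_add hi1 hi2, integral_const_mul, h1, h2]
    ring
  have hBorthT : ∀ ψ ∈ B,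
      ∫ ω, ⟪(2:ℝ) • ρC ω.1 - ω.2 - ψB ω.1.2, ψ ω.1.2⟫ ∂F₀ = 0 := by
    intro ψ hψ
    have hψC : (fun x : XSp M₁ M₂ => ψ x.2) ∈ Cset A B :=
      ⟨0, zero_mem _, ψ, hψ, by funext x; simp⟩
    have h1 : ∫ ω, ⟪ω.2 - ρC ω.1, ψ ω.1.2⟫ ∂F₀ = 0 := hCorth F₀ hF₀' _ hψC
    have h2 := hBorth₀ ψ hψ
    have hψF : MemLp (fun ω : ΩSp M₁ M₂ N => ψ ω.1.2) 2 F₀ := hliftB F₀ hmap₀ ψ hψ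
    have hψBF : MemLp (fun ω : ΩSp M₁ M₂ N => ψB ω.1.2) 2 F₀ := hliftB F₀ hmap₀ ψB hψB
    have he : (fun ω : ΩSp M₁ M₂ N => ⟪(2:ℝ) • ρC ω.1 - ω.2 - ψB ω.1.2, ψ ω.1.2⟫)
        = fun ω => (-2) * ⟪ω.2 - ρC ω.1, ψ ω.1.2⟫ + ⟪ω.2 - ψB ω.1.2, ψ ω.1.2⟫ := by
      funext ω
      have hv : (2:ℝ) • ρC ω.1 - ω.2 - ψB ω.1.2
          = (-2 : ℝ) • (ω.2 - ρC ω.1) + (ω.2 - ψB ω.1.2) := by module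
      rw [hv, inner_add_left, real_inner_smul_left]
    have hi1 : Integrable (fun ω : ΩSp M₁ M₂ N => (-2) * ⟪ω.2 - ρC ω.1, ψ ω.1.2⟫) F₀ :=
      (aux_integrable_inner (f := fun ω : ΩSp M₁ M₂ N => ω.2 - ρC ω.1)
        (g := fun ω => ψ ω.1.2) (hY₀.sub hρCF₀) hψF).const_mul (-2)
    have hi2 : Integrable (fun ω : ΩSp M₁ M₂ N => ⟪ω.2 - ψB ω.1.2, ψ ω.1.2⟫) F₀ :=
      aux_integrable_inner (f := fun ω : ΩSp M₁ M₂ N => ω.2 - ψB ω.1.2)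
        (g := fun ω => ψ ω.1.2) (hY₀.sub hψBF) hψF
    rw [he, integral_add hi1 hi2, integral_const_mul, h1, h2]
    ring
  -- the reflected measure lies in `𝓕`
  have hmap₁ : (F₀.map T).map Prod.fst = ν := by
    rw [Measure.map_map measurable_fst hTm]
    exact hmap₀
  have hF₁S : F₀.map T ∈ SetF ν A B φA ψB c := by
    refine ⟨Measure.isProbabilityMeasure_map hTm.aemeasurable, hmap₁, ?_, ?_, ?_, ?_⟩
    · exact (memLp_map_measure_iff measurable_snd.aestronglyMeasurable
        hTm.aemeasurable).mpr hY'
    · intro φ hφ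
      rw [hMSE₁ (fun x => φA x.1) ((hAmeas φA hφA).comp measurable_fst),
        hMSE₁ (fun x => φ x.1) ((hAmeas φ hφ).comp measurable_fst)]
      refine aux_min (Y := fun ω : ΩSp M₁ M₂ N => (2:ℝ) • ρC ω.1 - ω.2)
        (g₀ := fun ω => φA ω.1.1) (g := fun ω => φ ω.1.1) hY'
        (hliftA F₀ hmap₀ φA hφA) (hliftA F₀ hmap₀ φ hφ) ?_
      have h := hAorthT (φA - φ) (sub_mem hφA hφ)
      simpa using h
    · intro ψ hψ
      rw [hMSE₁ (fun x => ψB x.2) ((hBmeas ψB hψB).comp measurable_snd),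
        hMSE₁ (fun x => ψ x.2) ((hBmeas ψ hψ).comp measurable_snd)]
      refine aux_min (Y := fun ω : ΩSp M₁ M₂ N => (2:ℝ) • ρC ω.1 - ω.2)
        (g₀ := fun ω => ψB ω.1.2) (g := fun ω => ψ ω.1.2) hY'
        (hliftB F₀ hmap₀ ψB hψB) (hliftB F₀ hmap₀ ψ hψ) ?_
      have h := hBorthT (ψB - ψ) (sub_mem hψB hψ)
      simpa using h
    · have ht : ∫ ω, ‖ω.2‖ ^ 2 ∂(F₀.map T)
          = ∫ ω, ‖(2:ℝ) • ρC ω.1 - ω.2‖ ^ 2 ∂F₀ := by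
        rw [integral_map hTm.aemeasurable
          ((measurable_snd.norm.pow_const 2).aestronglyMeasurable)]
      have hx := aux_expand_sub (f := fun ω : ΩSp M₁ M₂ N => (2:ℝ) • ρC ω.1)
        (g := fun ω : ΩSp M₁ M₂ N => ω.2) (hρCF₀.const_smul (2:ℝ)) hY₀
      have h1 : ∫ ω, ‖(2:ℝ) • ρC ω.1‖ ^ 2 ∂F₀ = 4 * ∫ ω, ‖ρC ω.1‖ ^ 2 ∂F₀ := by
        have he : (fun ω : ΩSp M₁ M₂ N => ‖(2:ℝ) • ρC ω.1‖ ^ 2)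
            = fun ω => 4 * ‖ρC ω.1‖ ^ 2 := by
          funext ω; rw [norm_smul]; norm_num [mul_pow]
        rw [he, integral_const_mul]
      have h2 : ∫ ω, ⟪(2:ℝ) • ρC ω.1, ω.2⟫ ∂F₀ = 2 * ∫ ω, ‖ρC ω.1‖ ^ 2 ∂F₀ := by
        have he : (fun ω : ΩSp M₁ M₂ N => ⟪(2:ℝ) • ρC ω.1, ω.2⟫)
            = fun ω => 2 * ⟪ω.2, ρC ω.1⟫ := by
          funext ω; rw [real_inner_smul_left, real_inner_comm]
        rw [he, integral_const_mul, hIP F₀ hF₀']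
      rw [ht, hx, h1, h2, hc₀]
      ring
  -- the two-point lower bound
  have hρF₀ : MemLp (fun ω : ΩSp M₁ M₂ N => ρ ω.1) 2 F₀ := hliftL2 F₀ hmap₀ ρ hρm hρ2
  have hu : MemLp (fun ω : ΩSp M₁ M₂ N => ω.2 - ρC ω.1) 2 F₀ := hY₀.sub hρCF₀
  have hv : MemLp (fun ω : ΩSp M₁ M₂ N => ρC ω.1 - ρ ω.1) 2 F₀ := hρCF₀.sub hρF₀
  have hsum : 2 * (c - ∫ x, ‖ρC x‖ ^ 2 ∂ν) ≤ MSE F₀ ρ + MSE (F₀.map T) ρ := by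
    have e0 : MSE F₀ ρ = ∫ ω, ‖(ω.2 - ρC ω.1) + (ρC ω.1 - ρ ω.1)‖ ^ 2 ∂F₀ := by
      unfold MSE; congr 1; funext ω; congr 1; abel
    have e1 : MSE (F₀.map T) ρ
        = ∫ ω, ‖(ω.2 - ρC ω.1) - (ρC ω.1 - ρ ω.1)‖ ^ 2 ∂F₀ := by
      rw [hMSE₁ ρ hρm]; congr 1; funext ω
      rw [show (2:ℝ) • ρC ω.1 - ω.2 - ρ ω.1
          = -((ω.2 - ρC ω.1) - (ρC ω.1 - ρ ω.1)) by module, norm_neg]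
    have hMu : ∫ ω, ‖ω.2 - ρC ω.1‖ ^ 2 ∂F₀ = c - ∫ x, ‖ρC x‖ ^ 2 ∂ν := hconst F₀ hF₀'
    have hvnn : 0 ≤ ∫ ω, ‖ρC ω.1 - ρ ω.1‖ ^ 2 ∂F₀ := integral_nonneg fun ω => sq_nonneg _
    rw [e0, e1, aux_expand_add (f := fun ω : ΩSp M₁ M₂ N => ω.2 - ρC ω.1)
        (g := fun ω => ρC ω.1 - ρ ω.1) hu hv,
      aux_expand_sub (f := fun ω : ΩSp M₁ M₂ N => ω.2 - ρC ω.1)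
        (g := fun ω => ρC ω.1 - ρ ω.1) hu hv, hMu]
    linarith
  -- uniform upper bound for MSE on `𝓕`
  have hbd : ∀ F ∈ SetF ν A B φA ψB c, MSE F ρ ≤ 2 * c + 2 * ∫ x, ‖ρ x‖ ^ 2 ∂ν := by
    intro F hF
    obtain ⟨hP, hmap, hY, _, _, hcF⟩ := hF
    have hρF : MemLp (fun ω : ΩSp M₁ M₂ N => ρ ω.1) 2 F := hliftL2 F hmap ρ hρm hρ2
    have hint1 : Integrable (fun ω : ΩSp M₁ M₂ N => ‖ω.2 - ρ ω.1‖ ^ 2) F :=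
      aux_integrable_normsq (f := fun ω : ΩSp M₁ M₂ N => ω.2 - ρ ω.1) (hY.sub hρF)
    have hi1 : Integrable (fun ω : ΩSp M₁ M₂ N => 2 * ‖ω.2‖ ^ 2) F :=
      (aux_integrable_normsq hY).const_mul 2
    have hi2 : Integrable (fun ω : ΩSp M₁ M₂ N => 2 * ‖ρ ω.1‖ ^ 2) F :=
      (aux_integrable_normsq hρF).const_mul 2
    have hmono : MSE F ρ ≤ ∫ ω, (2 * ‖ω.2‖ ^ 2 + 2 * ‖ρ ω.1‖ ^ 2) ∂F := by
      unfold MSE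
      refine integral_mono hint1 (hi1.add hi2) fun ω => ?_
      have h := norm_sub_le ω.2 (ρ ω.1)
      have h2 : ‖ω.2 - ρ ω.1‖ ^ 2 ≤ (‖ω.2‖ + ‖ρ ω.1‖) ^ 2 :=
        pow_le_pow_left₀ (norm_nonneg _) h 2
      nlinarith [sq_nonneg (‖ω.2‖ - ‖ρ ω.1‖)]
    have heq : ∫ ω, (2 * ‖ω.2‖ ^ 2 + 2 * ‖ρ ω.1‖ ^ 2) ∂F
        = 2 * c + 2 * ∫ x, ‖ρ x‖ ^ 2 ∂ν := by
      rw [integral_add hi1 hi2, integral_const_mul, integral_const_mul, hcF,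
        ← hliftInt F hmap ρ hρm]
    rw [heq] at hmono
    exact hmono
  have hKb : ∀ F : Measure (ΩSp M₁ M₂ N),
      (⨆ _ : F ∈ SetF ν A B φA ψB c, MSE F ρ)
        ≤ max (2 * c + 2 * ∫ x, ‖ρ x‖ ^ 2 ∂ν) 0 :=
    fun F => Real.iSup_le (fun h => (hbd F h).trans (le_max_left _ _)) (le_max_right _ _)
  have hBdd : BddAbove (Set.range fun F => ⨆ _ : F ∈ SetF ν A B φA ψB c, MSE F ρ) :=
    ⟨max (2 * c + 2 * ∫ x, ‖ρ x‖ ^ 2 ∂ν) 0, by rintro x ⟨F, rfl⟩; exact hKb F⟩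
  have final : ∀ F' : Measure (ΩSp M₁ M₂ N), F' ∈ SetF ν A B φA ψB c →
      c - ∫ x, ‖ρC x‖ ^ 2 ∂ν ≤ MSE F' ρ →
      c - ∫ x, ‖ρC x‖ ^ 2 ∂ν ≤ ⨆ F ∈ SetF ν A B φA ψB c, MSE F ρ := by
    intro F' hmem hle
    have h1 : (⨆ _ : F' ∈ SetF ν A B φA ψB c, MSE F' ρ) = MSE F' ρ := ciSup_pos hmem
    have h2 := le_ciSup (f := fun F => ⨆ _ : F ∈ SetF ν A B φA ψB c, MSE F ρ) hBdd F'
    rw [h1] at h2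
    exact hle.trans h2
  rcases le_total (MSE F₀ ρ) (MSE (F₀.map T) ρ) with h | h
  · exact final (F₀.map T) hF₁S (by linarith)
  · exact final F₀ hF₀' (by linarith)
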